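/- Let k be an algebraically closed field, A a finitely generated commutative k-algebra which is an integral domain and a unique factorization domain, X := Hom_{k-alg}(A,k) the set of k-points of the corresponding irreducible affine variety, and W a finite-dimensional k-vector space. Identify a morphism φ : X → W with an element of W⊗_k A, whose value φ(x) ∈ W at x ∈ X is obtained by applying the k-algebra homomorphism x to the A-tensor factor. Let φ_1,…,φ_n, ψ : X → W be morphisms such that the set O = {x ∈ X : φ_1(x),…,φ_n(x) are linearly independent} is nonempty, while for each x ∈ X the n+1 vectors φ_1(x),…,φ_n(x),ψ(x) ∈ W are linearly dependent. Then there exist p_1,…,p_n,p_0 ∈ A whose only common divisors are units and such that p_0(x)·ψ(x) = Σ_{i=1}^n p_i(x)·φ_i(x) for all x ∈ X (where p(x) denotes x(p) ∈ k). Moreover, elements h_1,…,h_n,h_0 ∈ A satisfy h_0(x)·ψ(x) = Σ_{i=1}^n h_i(x)·φ_i(x) for all x ∈ X if and only if there is g ∈ A with h_i = g·p_i for all i ∈ {0,1,…,n}. -/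

import Mathlib

open TensorProduct LinearMap

noncomputable section

variable (k A W : Type) [Field k] [CommRing A] [Algebra k A]
  [AddCommGroup W] [Module k W]

/-- Evaluation of a morphism `X → W` (encoded as an element of `W ⊗ A`) at a
`k`-point `x : A →ₐ[k] k` of the affine variety `X` with coordinate ring `A`. -/
def evalMor (x : A →ₐ[k] k) : W ⊗[k] A →ₗ[k] W :=
  (TensorProduct.rid k W).toLinearMap ∘ₗ LinearMap.lTensor W x.toLinearMap

namespace Stmt10Aux

/-- A family of vectors in `Fin d → F` is linearly independent iff some maximal minor
of the associated matrix is non-zero. -/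
theorem li_iff_minor {F : Type*} [Field F] {m d : ℕ} (v : Fin m → Fin d → F) :
    LinearIndependent F v ↔ ∃ r : Fin m → Fin d,
      (Matrix.of fun i j => v i (r j)).det ≠ 0 := by
  constructor
  · intro hv
    set c : Fin d → (Fin m → F) := fun j i => v i j with hc
    have hspan : Submodule.span F (Set.range c) = ⊤ := by
      by_contra hne
      obtain ⟨f, hf0, hf⟩ := Submodule.exists_dual_map_eq_bot_of_lt_top
        (lt_top_iff_ne_top.mpr hne) inferInstance
      set u : Fin m → F := fun i => f fun j => if i = j then 1 else 0 with hu
      have hfu : ∀ y : Fin m → F, f y = ∑ i, y i • u i := fun y =>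
        LinearMap.pi_apply_eq_sum_univ f y
      have hzero : ∑ i, u i • v i = 0 := by
        funext j
        have hcj : f (c j) = 0 := by
          have hmem : c j ∈ Submodule.span F (Set.range c) :=
            Submodule.subset_span ⟨j, rfl⟩
          have : f (c j) ∈ Submodule.map f (Submodule.span F (Set.range c)) :=
            Submodule.mem_map_of_mem hmem
          rw [hf] at this
          simpa using this
        have : (∑ i, u i • v i) j = f (c j) := by
          rw [hfu (c j)]
          simp only [Finset.sum_apply, Pi.smul_apply, smul_eq_mul]
          exact Finset.sum_congr rfl fun i _ => mul_comm _ _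
        rw [Pi.zero_apply, this, hcj]
      have hu0 : ∀ i, u i = 0 := Fintype.linearIndependent_iff.mp hv u hzero
      refine hf0 (LinearMap.ext fun y => ?_)
      rw [hfu y]
      simp [hu0]
    obtain ⟨t, hts, htspan, htli⟩ := exists_linearIndependent F (Set.range c)
    rw [hspan] at htspan
    haveI : Finite t := htli.finite
    haveI := Fintype.ofFinite t
    let bt : Module.Basis t F (Fin m → F) := Module.Basis.mk htli (by rw [Subtype.range_coe, htspan])
    have hcard : Fintype.card t = m := by
      have h1 := Module.finrank_eq_card_basis bt
      rw [Module.finrank_fin_fun] at h1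
      exact h1.symm
    let e : Fin m ≃ t := (Fintype.equivFinOfCardEq hcard).symm
    have hchoice : ∀ i : Fin m, ∃ j : Fin d, c j = (e i : Fin m → F) := fun i => hts (e i).2
    choose r hr using hchoice
    refine ⟨r, ?_⟩
    have hcols : LinearIndependent F fun j : Fin m =>
        (Matrix.of fun i j' => v i (r j')).transpose j := by
      have h2 : (fun j : Fin m => (Matrix.of fun i j' => v i (r j')).transpose j)
          = fun j : Fin m => ((e j : Fin m → F)) := by
        funext j
        rw [← hr j]
        rfl
      rw [h2]
      exact htli.comp e e.injective
    have := Matrix.linearIndependent_cols_iff_isUnit.mp hcols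
    exact isUnit_iff_ne_zero.mp ((Matrix.isUnit_iff_isUnit_det _).mp this)
  · rintro ⟨r, hdet⟩
    have hM : IsUnit (Matrix.of fun i j => v i (r j)) :=
      (Matrix.isUnit_iff_isUnit_det _).mpr (isUnit_iff_ne_zero.mpr hdet)
    have hrows := Matrix.linearIndependent_rows_iff_isUnit.mpr hM
    rw [Fintype.linearIndependent_iff]
    intro g hg
    refine Fintype.linearIndependent_iff.mp hrows g ?_
    funext j
    have : (∑ i, g i • (Matrix.of fun i j' => v i (r j')) i) j
        = (∑ i, g i • v i) (r j) := by
      simp only [Finset.sum_apply, Pi.smul_apply, smul_eq_mul]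
      rfl
    rw [Pi.zero_apply]
    exact this.trans (by rw [hg, Pi.zero_apply])

variable {k A W}

/-- Weak Nullstellensatz: a regular function vanishing at all `k`-points of an
irreducible affine variety is zero. -/
theorem eval_eq_zero [IsAlgClosed k] [Algebra.FiniteType k A] [IsDomain A]
    (f : A) (hf : ∀ x : A →ₐ[k] k, x f = 0) : f = 0 := by
  haveI : IsJacobsonRing A := isJacobsonRing_of_finiteType (A := k)
  have hj : f ∈ (⊥ : Ideal A).jacobson := by
    rw [Ideal.jacobson, Ideal.mem_sInf]
    rintro m ⟨-, hmax⟩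
    haveI := hmax
    letI : Field (A ⧸ m) := Ideal.Quotient.field m
    haveI : Algebra.FiniteType k (A ⧸ m) :=
      Algebra.FiniteType.of_surjective (Ideal.Quotient.mkₐ k m)
        (Ideal.Quotient.mkₐ_surjective k m)
    haveI : Module.Finite k (A ⧸ m) := finite_of_finite_type_of_isJacobsonRing k _
    haveI : Algebra.IsIntegral k (A ⧸ m) := Algebra.IsIntegral.of_finite k _
    have hsurj : Function.Surjective (algebraMap k (A ⧸ m)) :=
      IsAlgClosed.algebraMap_bijective_of_isIntegral.2
    have hbij : Function.Bijective (Algebra.ofId k (A ⧸ m)) :=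
      ⟨(algebraMap k (A ⧸ m)).injective, hsurj⟩
    let e : k ≃ₐ[k] (A ⧸ m) := AlgEquiv.ofBijective (Algebra.ofId k (A ⧸ m)) hbij
    have hx := hf ((e.symm : (A ⧸ m) →ₐ[k] k).comp (Ideal.Quotient.mkₐ k m))
    have h0 : Ideal.Quotient.mk m f = 0 := by
      have h1 : e.symm (Ideal.Quotient.mkₐ k m f) = 0 := hx
      have h2 := congrArg e h1
      rw [AlgEquiv.apply_symm_apply, map_zero] at h2
      exact h2
    exact Ideal.Quotient.eq_zero_iff_mem.mp h0
  rw [← Ideal.radical_eq_jacobson] at hj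
  have : f ∈ nilradical A := hj
  rw [nilradical_eq_zero] at this
  simpa using this

variable {d : ℕ}

/-- Coordinates of an element of `W ⊗ A` with respect to a basis of `W`. -/
def coordT (b : Module.Basis (Fin d) k W) (j : Fin d) : W ⊗[k] A →ₗ[k] A :=
  (TensorProduct.lid k A).toLinearMap ∘ₗ LinearMap.rTensor A (b.coord j)

lemma coordT_tmul (b : Module.Basis (Fin d) k W) (j : Fin d) (w : W) (a : A) :
    coordT b j (w ⊗ₜ a) = b.repr w j • a := by
  simp [coordT, Module.Basis.coord_apply]

lemma evalMor_apply (b : Module.Basis (Fin d) k W) (x : A →ₐ[k] k) (w : W ⊗[k] A) :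
    evalMor k A W x w = ∑ j, x (coordT b j w) • b j := by
  induction w using TensorProduct.induction_on with
  | zero => simp
  | tmul w a =>
      have h1 : evalMor k A W x (w ⊗ₜ a) = x a • w := by
        simp [evalMor]
      rw [h1]
      simp only [coordT_tmul, map_smul]
      have h2 : ∀ j, (b.repr w j • x a) • b j = x a • (b.repr w j • b j) := by
        intro j
        rw [smul_eq_mul, mul_comm, mul_smul]
      rw [Finset.sum_congr rfl fun j _ => h2 j, ← Finset.smul_sum, Module.Basis.sum_repr]
  | add u v hu hv =>
      simp only [map_add, hu, hv, add_smul, Finset.sum_add_distrib]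

lemma repr_evalMor (b : Module.Basis (Fin d) k W) (x : A →ₐ[k] k) (w : W ⊗[k] A) (j : Fin d) :
    b.repr (evalMor k A W x w) j = x (coordT b j w) := by
  rw [evalMor_apply b x w]
  exact congrFun (b.repr_sum_self fun j => x (coordT b j w)) j

lemma equivFun_evalMor (b : Module.Basis (Fin d) k W) (x : A →ₐ[k] k) (w : W ⊗[k] A) :
    b.equivFun (evalMor k A W x w) = fun j => x (coordT b j w) := by
  funext j
  rw [Module.Basis.equivFun_apply, repr_evalMor]

lemma coordT_total (b : Module.Basis (Fin d) k W) (w : W ⊗[k] A) :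
    w = ∑ j, b j ⊗ₜ[k] coordT b j w := by
  induction w using TensorProduct.induction_on with
  | zero => simp
  | tmul w a =>
      simp only [coordT_tmul]
      conv_lhs => rw [← Module.Basis.sum_repr b w]
      rw [TensorProduct.sum_tmul]
      exact Finset.sum_congr rfl fun j _ => TensorProduct.smul_tmul _ _ _
  | add u v hu hv =>
      simp only [map_add, TensorProduct.tmul_add, Finset.sum_add_distrib, ← hu, ← hv]

lemma eq_zero_of_coordT (b : Module.Basis (Fin d) k W) (w : W ⊗[k] A)
    (h : ∀ j, coordT b j w = 0) : w = 0 := by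
  rw [show w = _ from coordT_total b w]
  simp [h]

/-- An evaluation relation holds at all points iff it holds coordinatewise in `A`. -/
lemma rel_iff [IsAlgClosed k] [Algebra.FiniteType k A] [IsDomain A]
    (b : Module.Basis (Fin d) k W) {m : ℕ} (φ : Fin m → W ⊗[k] A) (ψ : W ⊗[k] A)
    (h : Fin m → A) (h0 : A) :
    (∀ x : A →ₐ[k] k, x h0 • evalMor k A W x ψ = ∑ i, x (h i) • evalMor k A W x (φ i)) ↔
    (∀ j, h0 * coordT b j ψ = ∑ i, h i * coordT b j (φ i)) := by
  constructor
  · intro H j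
    have key : ∀ x : A →ₐ[k] k,
        x (h0 * coordT b j ψ - ∑ i, h i * coordT b j (φ i)) = 0 := by
      intro x
      have h2 := congrArg (fun v => b.repr v j) (H x)
      simp only [map_smul, map_sum, Finsupp.smul_apply, Finsupp.coe_finset_sum,
        Finset.sum_apply, repr_evalMor, smul_eq_mul] at h2
      rw [map_sub, map_mul, map_sum]
      simp only [map_mul]
      exact sub_eq_zero.mpr h2
    have := eval_eq_zero _ key
    exact sub_eq_zero.mp this
  · intro H x
    have hterm : ∀ j, x h0 * x (coordT b j ψ) = ∑ i, x (h i) * x (coordT b j (φ i)) := by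
      intro j
      rw [← map_mul, H j, map_sum]
      simp only [map_mul]
    simp only [evalMor_apply b x, Finset.smul_sum, smul_smul]
    conv_rhs => rw [Finset.sum_comm]
    exact Finset.sum_congr rfl fun j _ => by rw [hterm j, Finset.sum_smul]

end Stmt10Aux

open Stmt10Aux

theorem stmt10 [IsAlgClosed k] [Algebra.FiniteType k A] [IsDomain A]
    [UniqueFactorizationMonoid A] [FiniteDimensional k W]
    (n : ℕ) (φ : Fin n → W ⊗[k] A) (ψ : W ⊗[k] A)
    (hO : ∃ x : A →ₐ[k] k, LinearIndependent k fun i => evalMor k A W x (φ i))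
    (hdep : ∀ x : A →ₐ[k] k,
      ¬ LinearIndependent k (Fin.cons (evalMor k A W x ψ) fun i => evalMor k A W x (φ i))) :
    ∃ (p : Fin n → A) (p0 : A),
      (∀ g : A, g ∣ p0 → (∀ i, g ∣ p i) → IsUnit g) ∧
      (∀ x : A →ₐ[k] k,
        x p0 • evalMor k A W x ψ = ∑ i, x (p i) • evalMor k A W x (φ i)) ∧
      (∀ (h : Fin n → A) (h0 : A),
        (∀ x : A →ₐ[k] k,
          x h0 • evalMor k A W x ψ = ∑ i, x (h i) • evalMor k A W x (φ i)) ↔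
        ∃ g : A, h0 = g * p0 ∧ ∀ i, h i = g * p i) := by
  classical
  letI : StrongNormalizationMonoid A := UniqueFactorizationMonoid.normalizationMonoid
  letI : StrongNormalizedGCDMonoid A := UniqueFactorizationMonoid.toStrongNormalizedGCDMonoid A
  set b : Module.Basis (Fin (Module.finrank k W)) k W := Module.finBasis k W with hbdef
  set K := FractionRing A with hKdef
  set ι : A →+* K := algebraMap A K with hιdef
  have hι : Function.Injective ι := IsFractionRing.injective A K
  -- Step A : the φ's are linearly independent over K
  obtain ⟨x0, hx0⟩ := hO
  have hx0' : LinearIndependent k fun i => fun j => x0 (coordT b j (φ i)) := by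
    have h1 := hx0.map' b.equivFun.toLinearMap b.equivFun.ker
    have h2 : (⇑b.equivFun.toLinearMap ∘ fun i => evalMor k A W x0 (φ i))
        = fun i => fun j => x0 (coordT b j (φ i)) := by
      funext i
      exact equivFun_evalMor b x0 (φ i)
    rwa [h2] at h1
  obtain ⟨r0, hr0⟩ := (li_iff_minor _).mp hx0'
  have hD0 : (Matrix.of fun i j => coordT b (r0 j) (φ i)).det ≠ 0 := by
    intro h
    apply hr0
    have h2 : (Matrix.of fun i j => (fun i j => x0 (coordT b j (φ i))) i (r0 j)).det
        = x0 (Matrix.of fun i j => coordT b (r0 j) (φ i)).det := by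
      rw [AlgHom.map_det]
      rfl
    rw [h2, h, map_zero]
  have hvK : LinearIndependent K fun i => fun j => ι (coordT b j (φ i)) := by
    refine (li_iff_minor _).mpr ⟨r0, ?_⟩
    have : (Matrix.of fun i j => ι (coordT b (r0 j) (φ i))).det
        = ι (Matrix.of fun i j => coordT b (r0 j) (φ i)).det := by
      rw [RingHom.map_det]
      rfl
    rw [show (Matrix.of fun i j => (fun i j => ι (coordT b j (φ i))) i (r0 j))
        = Matrix.of fun i j => ι (coordT b (r0 j) (φ i)) from rfl, this]
    intro h
    exact hD0 (hι (by rwa [map_zero]))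
  -- Step B : the family (ψ, φ) is linearly dependent over K
  have hdepK : ¬ LinearIndependent K
      (Fin.cons (fun j => ι (coordT b j ψ)) fun i => fun j => ι (coordT b j (φ i))) := by
    intro hli
    obtain ⟨r, hr⟩ := (li_iff_minor _).mp hli
    set u : Fin (n + 1) → Fin (Module.finrank k W) → A :=
      Fin.cons (fun j => coordT b j ψ) (fun i j => coordT b j (φ i)) with hu
    have hcons : (Fin.cons (fun j => ι (coordT b j ψ))
        (fun i => fun j => ι (coordT b j (φ i))) :
        Fin (n + 1) → Fin (Module.finrank k W) → K) = fun i j => ι (u i j) := by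
      funext i
      refine Fin.cases ?_ ?_ i <;> simp [hu]
    rw [hcons] at hr
    have hD2 : (Matrix.of fun i j => u i (r j)).det ≠ 0 := by
      intro h
      apply hr
      have : (Matrix.of fun i j => (fun i j => ι (u i j)) i (r j)).det
          = ι (Matrix.of fun i j => u i (r j)).det := by
        rw [RingHom.map_det]
        rfl
      rw [this, h, map_zero]
    have hex : ¬ ∀ x : A →ₐ[k] k, x (Matrix.of fun i j => u i (r j)).det = 0 := by
      intro hall
      exact hD2 (eval_eq_zero _ hall)
    push_neg at hex
    obtain ⟨x, hx⟩ := hex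
    have hxli : LinearIndependent k fun i => fun j => x (u i j) := by
      refine (li_iff_minor _).mpr ⟨r, ?_⟩
      intro h
      apply hx
      have : (Matrix.of fun i j => (fun i j => x (u i j)) i (r j)).det
          = x (Matrix.of fun i j => u i (r j)).det := by
        rw [AlgHom.map_det]
        rfl
      rw [← this, h]
    apply hdep x
    apply LinearIndependent.of_comp b.equivFun.toLinearMap
    have heq : (⇑b.equivFun.toLinearMap ∘
        Fin.cons (evalMor k A W x ψ) fun i => evalMor k A W x (φ i))
        = fun i => fun j => x (u i j) := by
      funext i
      refine Fin.cases ?_ ?_ i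
      · simp only [Function.comp_apply, Fin.cons_zero, LinearEquiv.coe_coe]
        rw [equivFun_evalMor b x ψ]
        funext j
        simp [hu]
      · intro i
        simp only [Function.comp_apply, Fin.cons_succ, LinearEquiv.coe_coe]
        rw [equivFun_evalMor b x (φ i)]
        funext j
        simp [hu]
    rw [heq]
    exact hxli
  -- Step C : ψ lies in the K-span of the φ's
  have hw : (fun j => ι (coordT b j ψ)) ∈
      Submodule.span K (Set.range fun i => fun j => ι (coordT b j (φ i))) := by
    by_contra hnot
    exact hdepK (linearIndependent_fin_cons.mpr ⟨hvK, hnot⟩)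
  obtain ⟨c, hc⟩ := (Submodule.mem_span_range_iff_exists_fun K).mp hw
  -- Step D : clear denominators
  obtain ⟨s, hs⟩ := IsLocalization.exist_integer_multiples (nonZeroDivisors A)
    (Finset.univ : Finset (Fin n)) c
  have hs' : ∀ i : Fin n, ∃ a : A, ι a = (s : A) • c i := by
    intro i
    exact hs i (Finset.mem_univ i)
  choose q hq using hs'
  set q0 : A := (s : A) with hq0def
  have hq0 : q0 ≠ 0 := nonZeroDivisors.coe_ne_zero s
  have hcoord : ∀ j, q0 * coordT b j ψ = ∑ i, q i * coordT b j (φ i) := by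
    intro j
    apply hι
    rw [map_mul, map_sum]
    simp only [map_mul]
    have h1 := congrFun hc j
    simp only [Finset.sum_apply, Pi.smul_apply, smul_eq_mul] at h1
    calc ι q0 * ι (coordT b j ψ) = ι q0 * ∑ i, c i * ι (coordT b j (φ i)) := by rw [h1]
      _ = ∑ i, (ι q0 * c i) * ι (coordT b j (φ i)) := by
          rw [Finset.mul_sum]
          exact Finset.sum_congr rfl fun i _ => by ring
      _ = ∑ i, ι (q i) * ι (coordT b j (φ i)) := by
          refine Finset.sum_congr rfl fun i _ => ?_
          rw [hq i, Algebra.smul_def]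
  -- Step E : divide out the gcd
  set P : Fin (n + 1) → A := Fin.cons q0 q with hP
  set g : A := Finset.univ.gcd P with hgdef
  have hgdvd : ∀ i, g ∣ P i := fun i => Finset.gcd_dvd (Finset.mem_univ i)
  choose p' hp' using hgdvd
  set p0 : A := p' 0 with hp0def
  set p : Fin n → A := fun i => p' i.succ with hpdef
  have hP0 : q0 = g * p0 := by
    have := hp' 0
    rwa [hP, Fin.cons_zero] at this
  have hPsucc : ∀ i : Fin n, q i = g * p i := by
    intro i
    have := hp' i.succ
    rwa [hP, Fin.cons_succ] at this
  have hg0 : g ≠ 0 := by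
    intro h
    exact hq0 (by rw [hP0, h, zero_mul])
  have hp0 : p0 ≠ 0 := by
    intro h
    exact hq0 (by rw [hP0, h, mul_zero])
  have hrel : ∀ j, p0 * coordT b j ψ = ∑ i, p i * coordT b j (φ i) := by
    intro j
    apply mul_left_cancel₀ hg0
    rw [Finset.mul_sum]
    calc g * (p0 * coordT b j ψ) = q0 * coordT b j ψ := by rw [hP0, mul_assoc]
      _ = ∑ i, q i * coordT b j (φ i) := hcoord j
      _ = ∑ i, g * (p i * coordT b j (φ i)) := by
          refine Finset.sum_congr rfl fun i _ => ?_
          rw [hPsucc i, mul_assoc]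
  have hgcd : ∀ t : A, t ∣ p0 → (∀ i, t ∣ p i) → IsUnit t := by
    intro t h1 h2
    have hdvd : g * t ∣ g := by
      conv_rhs => rw [hgdef]
      refine Finset.dvd_gcd fun i _ => ?_
      refine Fin.cases ?_ ?_ i
      · rw [hP, Fin.cons_zero, hP0]
        exact mul_dvd_mul_left g h1
      · intro i
        rw [hP, Fin.cons_succ, hPsucc i]
        exact mul_dvd_mul_left g (h2 i)
    have : t ∣ 1 := (mul_dvd_mul_iff_left hg0).mp (by rwa [mul_one])
    exact isUnit_of_dvd_one this
  refine ⟨p, p0, hgcd, (rel_iff b φ ψ p p0).mpr hrel, ?_⟩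
  -- Step G : classification of all relations
  intro h h0
  constructor
  · intro H
    have hc2 : ∀ j, h0 * coordT b j ψ = ∑ i, h i * coordT b j (φ i) :=
      (rel_iff b φ ψ h h0).mp H
    have key : ∀ i, h0 * p i = p0 * h i := by
      have hzero : ∑ i, ι (h0 * p i - p0 * h i) • (fun j => ι (coordT b j (φ i))) = 0 := by
        funext j
        simp only [Finset.sum_apply, Pi.smul_apply, smul_eq_mul, Pi.zero_apply]
        have : ∀ i, ι (h0 * p i - p0 * h i) * ι (coordT b j (φ i))
            = ι ((h0 * p i) * coordT b j (φ i)) - ι ((p0 * h i) * coordT b j (φ i)) := by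
          intro i
          rw [← map_mul, ← map_sub, sub_mul]
        rw [Finset.sum_congr rfl fun i _ => this i, Finset.sum_sub_distrib,
          ← map_sum, ← map_sum]
        have e1 : ∑ i, (h0 * p i) * coordT b j (φ i) = h0 * (p0 * coordT b j ψ) := by
          rw [hrel j, Finset.mul_sum]
          exact Finset.sum_congr rfl fun i _ => by ring
        have e2 : ∑ i, (p0 * h i) * coordT b j (φ i) = p0 * (h0 * coordT b j ψ) := by
          rw [hc2 j, Finset.mul_sum]
          exact Finset.sum_congr rfl fun i _ => by ring
        rw [e1, e2, show h0 * (p0 * coordT b j ψ) = p0 * (h0 * coordT b j ψ) from by ring,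
          sub_self]
      intro i
      have hi := Fintype.linearIndependent_iff.mp hvK _ hzero i
      have : h0 * p i - p0 * h i = 0 := hι (by rw [hi, map_zero])
      exact sub_eq_zero.mp this
    have hdvdall : ∀ i : Fin (n + 1), p0 ∣ h0 * p' i := by
      intro i
      refine Fin.cases ?_ ?_ i
      · exact dvd_mul_left p0 h0
      · intro i
        rw [show p' i.succ = p i from rfl, key i]
        exact dvd_mul_right p0 (h i)
    have hdvdgcd : p0 ∣ Finset.univ.gcd fun i => h0 * p' i :=
      Finset.dvd_gcd fun i _ => hdvdall i
    rw [Finset.gcd_mul_left] at hdvdgcd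
    have hunit : IsUnit (Finset.univ.gcd p') := by
      refine hgcd _ ?_ ?_
      · exact Finset.gcd_dvd (Finset.mem_univ 0)
      · intro i
        exact Finset.gcd_dvd (Finset.mem_univ i.succ)
    have h3 : p0 ∣ normalize h0 := (hunit.dvd_mul_right).mp hdvdgcd
    have h4 : p0 ∣ h0 := dvd_normalize_iff.mp h3
    obtain ⟨g2, hg2⟩ := h4
    refine ⟨g2, by rw [hg2, mul_comm], fun i => ?_⟩
    have hk := key i
    rw [hg2] at hk
    have : p0 * h i = p0 * (g2 * p i) := by rw [← hk]; ring
    exact mul_left_cancel₀ hp0 this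
  · rintro ⟨g2, hg0', hgi⟩
    refine (rel_iff b φ ψ h h0).mpr fun j => ?_
    calc h0 * coordT b j ψ = g2 * (p0 * coordT b j ψ) := by rw [hg0']; ring
      _ = ∑ i, g2 * (p i * coordT b j (φ i)) := by rw [hrel j, Finset.mul_sum]
      _ = ∑ i, h i * coordT b j (φ i) := Finset.sum_congr rfl fun i _ => by
            rw [hgi i]; ring
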